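/- arXiv:1105.4250 — 11 statements merged into one kernel-verified Lean document; each statement's English description precedes it below -/
import Mathlib

section
/- Let F be a k-regular biset-family on a finite set T, and let F^k = {(X,X⁺) ∈ F : |X| ≤ (|T|−k)/2}. If (X,X⁺) and (Y,Y⁺) are members of F^k with X ∩ Y ≠ ∅, then their intersection (X∩Y, X⁺∩Y⁺) lies in F^k and their union (X∪Y, X⁺∪Y⁺) lies in F. -/
open Finset

/-- A biset on ground set `T` is a pair `(X, X⁺)` with `X ⊆ X⁺ ⊆ T`. -/
def IsBisetOn {α : Type*} (T : Finset α) (A : Finset α × Finset α) : Prop :=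
  A.1 ⊆ A.2 ∧ A.2 ⊆ T

/-- A biset-family `F` on `T` is `k`-regular if `|X⁺ \ X| ≤ k` for every member, and
whenever two members have intersecting inner parts and `|X ∪ Y| ≤ |T| - k - 1`,
both the intersection biset and the union biset belong to `F`. -/
def KRegular {α : Type*} [DecidableEq α] (T : Finset α) (k : ℕ)
    (F : Finset (Finset α × Finset α)) : Prop :=
  (∀ A ∈ F, (A.2 \ A.1).card ≤ k) ∧
  ∀ A ∈ F, ∀ B ∈ F, (A.1 ∩ B.1).Nonempty → (A.1 ∪ B.1).card + k + 1 ≤ T.card →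
    (A.1 ∩ B.1, A.2 ∩ B.2) ∈ F ∧ (A.1 ∪ B.1, A.2 ∪ B.2) ∈ F

/-- `F^k`: subfamily of bisets in `F` whose inner part has size at most `(|T|-k)/2`,
i.e. `2|X| ≤ |T| - k`. -/
def smallPart {α : Type*} [DecidableEq α] (T : Finset α) (k : ℕ)
    (F : Finset (Finset α × Finset α)) : Finset (Finset α × Finset α) :=
  F.filter fun A => 2 * A.1.card + k ≤ T.card

/-- If `(X,X⁺)` and `(Y,Y⁺)` are members of `F^k` with `X ∩ Y ≠ ∅`, then their
intersection lies in `F^k` and their union lies in `F`. -/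
theorem stmt_1 {α : Type*} [DecidableEq α] (T : Finset α) (k : ℕ)
    (F : Finset (Finset α × Finset α))
    (hB : ∀ A ∈ F, IsBisetOn T A) (hreg : KRegular T k F)
    (A B : Finset α × Finset α)
    (hA : A ∈ smallPart T k F) (hBm : B ∈ smallPart T k F)
    (hint : (A.1 ∩ B.1).Nonempty) :
    (A.1 ∩ B.1, A.2 ∩ B.2) ∈ smallPart T k F ∧ (A.1 ∪ B.1, A.2 ∪ B.2) ∈ F := by
  simp only [smallPart, mem_filter] at hA hBm ⊢
  obtain ⟨hAF, hAs⟩ := hA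
  obtain ⟨hBF, hBs⟩ := hBm
  have hcard : (A.1 ∪ B.1).card + k + 1 ≤ T.card := by
    have h1 : (A.1 ∪ B.1).card + (A.1 ∩ B.1).card = A.1.card + B.1.card :=
      card_union_add_card_inter A.1 B.1
    have h2 : 1 ≤ (A.1 ∩ B.1).card := card_pos.mpr hint
    omega
  obtain ⟨hi, hu⟩ := hreg.2 A hAF B hBF hint hcard
  refine ⟨⟨hi, ?_⟩, hu⟩
  have := card_le_card (inter_subset_left : A.1 ∩ B.1 ⊆ A.1)
  omega
end

section
/- Let F be a k-regular biset-family on a finite set T with k < |T|. Then ν(F) ≤ ν(F^k) + 2|T|/(|T|−k), where ν denotes the maximum number of bisets in the family with pairwise-disjoint inner parts. -/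
open Finset
open scoped Classical

/-- `ν(F)`: the maximum number of bisets in `F` whose inner parts are pairwise disjoint. -/
noncomputable def nuBiset {α : Type*} [DecidableEq α]
    (F : Finset (Finset α × Finset α)) : ℕ :=
  F.powerset.sup fun G =>
    if (G : Set (Finset α × Finset α)).Pairwise (fun A B => Disjoint A.1 B.1)
    then G.card else 0

/-- `ν(F) ≤ ν(F^k) + 2|T|/(|T|-k)`, stated as
`(|T|-k)·ν(F) ≤ (|T|-k)·ν(F^k) + 2|T|`. -/
theorem stmt_2 {α : Type*} [DecidableEq α] (T : Finset α) (k : ℕ) (hk : k < T.card)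
    (F : Finset (Finset α × Finset α))
    (hB : ∀ A ∈ F, IsBisetOn T A) (hreg : KRegular T k F) :
    (T.card - k) * nuBiset F ≤ (T.card - k) * nuBiset (smallPart T k F) + 2 * T.card := by
  classical
  obtain ⟨G, hGmem, hGeq⟩ := Finset.exists_mem_eq_sup F.powerset
    ⟨∅, Finset.mem_powerset.mpr (Finset.empty_subset F)⟩
    (fun G => if (G : Set (Finset α × Finset α)).Pairwise (fun A B => Disjoint A.1 B.1)
      then G.card else 0)
  have hGF : G ⊆ F := Finset.mem_powerset.mp hGmem
  by_cases hpw : (G : Set (Finset α × Finset α)).Pairwise (fun A B => Disjoint A.1 B.1)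
  · have hν : nuBiset F = G.card := by
      rw [nuBiset, hGeq, if_pos hpw]
    set P : Finset α × Finset α → Prop := fun A => 2 * A.1.card + k ≤ T.card with hP
    set Gs := G.filter P with hGs
    set Gl := G.filter (fun A => ¬ P A) with hGl
    have hsplit : Gs.card + Gl.card = G.card := Finset.card_filter_add_card_filter_not _
    -- small part bound
    have hsmall : Gs.card ≤ nuBiset (smallPart T k F) := by
      have hsub : Gs ⊆ smallPart T k F := by
        intro A hA
        rw [Finset.mem_filter] at hA
        exact Finset.mem_filter.mpr ⟨hGF hA.1, hA.2⟩
      have hpws : (Gs : Set (Finset α × Finset α)).Pairwise (fun A B => Disjoint A.1 B.1) :=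
        hpw.mono (by exact_mod_cast Finset.coe_subset.mpr (Finset.filter_subset _ _))
      have := Finset.le_sup (f := fun (H : Finset (Finset α × Finset α)) => if (H : Set (Finset α × Finset α)).Pairwise
          (fun A B => Disjoint A.1 B.1) then H.card else 0)
        (Finset.mem_powerset.mpr hsub)
      simp only [if_pos hpws] at this
      exact this.trans_eq rfl
    -- large part bound
    have hdisj : ∀ A ∈ Gl, ∀ B ∈ Gl, A ≠ B → Disjoint A.1 B.1 := by
      intro A hA B hB hne
      exact hpw (Finset.mem_coe.mpr (Finset.filter_subset _ _ hA))
        (Finset.mem_coe.mpr (Finset.filter_subset _ _ hB)) hne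
    have hsum : ∑ A ∈ Gl, A.1.card ≤ T.card := by
      rw [← Finset.card_biUnion hdisj]
      apply Finset.card_le_card
      intro x hx
      obtain ⟨A, hA, hxA⟩ := Finset.mem_biUnion.mp hx
      exact ((hB A (hGF (Finset.filter_subset _ _ hA))).1.trans
        (hB A (hGF (Finset.filter_subset _ _ hA))).2) hxA
    have heach : ∀ A ∈ Gl, T.card - k + 1 ≤ 2 * A.1.card := by
      intro A hA
      have := (Finset.mem_filter.mp hA).2
      simp only [hP, not_le] at this
      omega
    have hcount : Gl.card * (T.card - k + 1) ≤ 2 * T.card := by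
      calc Gl.card * (T.card - k + 1) = ∑ _A ∈ Gl, (T.card - k + 1) := by
            rw [Finset.sum_const, smul_eq_mul]
        _ ≤ ∑ A ∈ Gl, 2 * A.1.card := Finset.sum_le_sum heach
        _ = 2 * ∑ A ∈ Gl, A.1.card := by rw [Finset.mul_sum]
        _ ≤ 2 * T.card := Nat.mul_le_mul_left 2 hsum
    have hlarge : (T.card - k) * Gl.card ≤ 2 * T.card := by
      calc (T.card - k) * Gl.card ≤ (T.card - k + 1) * Gl.card :=
            Nat.mul_le_mul_right _ (Nat.le_succ _)
        _ = Gl.card * (T.card - k + 1) := Nat.mul_comm _ _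
        _ ≤ 2 * T.card := hcount
    rw [hν, ← hsplit, Nat.mul_add]
    exact Nat.add_le_add (Nat.mul_le_mul_left _ hsmall) hlarge
  · have hν : nuBiset F = 0 := by rw [nuBiset, hGeq, if_neg hpw]
    simp [hν]
end

section
/- Let F' be a biset-family on T and let T' ⊆ T be a transversal of F' (i.e., T' meets the inner part of every member of F'). Form an edge set I' by picking, for each s ∈ T', one directed edge from s to a point of each inclusion-minimal member of the set-family {X* : (X,X⁺) ∈ F', s ∈ X}. Then I' covers F': every biset (X,X⁺) ∈ F' has some edge of I' going from X to X*. -/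
open Finset

/-- An edge `(u,v)` covers a biset `(X,X⁺)` (on ground set `T`) if `u ∈ X` and
`v ∈ X* = T \ X⁺`. -/
def EdgeCovers {α : Type*} [DecidableEq α] (T : Finset α) (e : α × α)
    (A : Finset α × Finset α) : Prop :=
  e.1 ∈ A.1 ∧ e.2 ∈ T \ A.2

/-- If `T'` is a transversal of `F'` and `I'` contains, for each `s ∈ T'`, an edge
from `s` into every inclusion-minimal member of `{X* : (X,X⁺) ∈ F', s ∈ X}`,
then `I'` covers `F'`. -/
theorem stmt_5 {α : Type*} [DecidableEq α] (T T' : Finset α)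
    (F' : Finset (Finset α × Finset α)) (I' : Finset (α × α))
    (hB : ∀ A ∈ F', IsBisetOn T A)
    (hT' : T' ⊆ T)
    (htrans : ∀ A ∈ F', (T' ∩ A.1).Nonempty)
    (hne : ∀ A ∈ F', (T \ A.2).Nonempty)
    (hI : ∀ s ∈ T', ∀ Z : Finset α,
      (∃ A ∈ F', s ∈ A.1 ∧ Z = T \ A.2) →
      (∀ W : Finset α, (∃ A ∈ F', s ∈ A.1 ∧ W = T \ A.2) → ¬ W ⊂ Z) →
      ∃ z ∈ Z, (s, z) ∈ I') :
    ∀ A ∈ F', ∃ e ∈ I', EdgeCovers T e A := by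
  intro A hA
  obtain ⟨s, hs⟩ := htrans A hA
  rw [Finset.mem_inter] at hs
  obtain ⟨hsT', hsA⟩ := hs
  -- family of candidate sets contained in T \ A.2
  set S : Finset (Finset α) :=
    ((F'.filter (fun B => s ∈ B.1)).image (fun B => T \ B.2)).filter
      (fun W => W ⊆ T \ A.2) with hS
  have hAmem : (T \ A.2) ∈ S := by
    simp only [hS, Finset.mem_filter, Finset.mem_image]
    exact ⟨⟨A, ⟨hA, hsA⟩, rfl⟩, Finset.Subset.refl _⟩
  obtain ⟨Z, hZmem, hZmin⟩ := S.exists_min_image (fun W => W.card) ⟨_, hAmem⟩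
  simp only [hS, Finset.mem_filter, Finset.mem_image] at hZmem
  obtain ⟨⟨B, hB', hZB⟩, hZsub⟩ := hZmem
  have hex : ∃ C ∈ F', s ∈ C.1 ∧ Z = T \ C.2 := ⟨B, hB'.1, hB'.2, hZB.symm⟩
  have hmin : ∀ W : Finset α, (∃ C ∈ F', s ∈ C.1 ∧ W = T \ C.2) → ¬ W ⊂ Z := by
    rintro W ⟨C, hC, hsC, rfl⟩ hWZ
    have hWmem : (T \ C.2) ∈ S := by
      simp only [hS, Finset.mem_filter, Finset.mem_image]
      exact ⟨⟨C, ⟨hC, hsC⟩, rfl⟩, hWZ.subset.trans hZsub⟩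
    exact absurd (hZmin _ hWmem) (not_le_of_gt (Finset.card_lt_card hWZ))
  obtain ⟨z, hzZ, hzI⟩ := hI s hsT' Z hex hmin
  exact ⟨(s, z), hzI, hsA, hZsub hzZ⟩
end

section
/- Let F' be a crossing biset-family on T and fix s ∈ T. Then the inclusion-minimal members of the set-family {X* : (X,X⁺) ∈ F', s ∈ X} are pairwise disjoint, and hence their number is at most ν(F̄'), the maximum number of members of the reverse family with pairwise-disjoint inner parts. -/
open Finset
open scoped Classical

/-- Crossing biset-family. -/
def Crossing {α : Type*} [DecidableEq α] (T : Finset α)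
    (F : Finset (Finset α × Finset α)) : Prop :=
  ∀ A ∈ F, ∀ B ∈ F, (A.1 ∩ B.1).Nonempty → ((T \ A.2) ∩ (T \ B.2)).Nonempty →
    (A.1 ∩ B.1, A.2 ∩ B.2) ∈ F ∧ (A.1 ∪ B.1, A.2 ∪ B.2) ∈ F

/-- The reverse family `F̄ = {(T \ X⁺, T \ X) : (X,X⁺) ∈ F}`. -/
def revFam {α : Type*} [DecidableEq α] (T : Finset α)
    (F : Finset (Finset α × Finset α)) : Finset (Finset α × Finset α) :=
  F.image fun A => (T \ A.2, T \ A.1)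

/-- For a crossing biset-family `F'` on `T` and `s ∈ T`, the inclusion-minimal
members of `{X* : (X,X⁺) ∈ F', s ∈ X}` are pairwise disjoint, and their number
is at most `ν(F̄')`. -/
theorem stmt_6 {α : Type*} [DecidableEq α] (T : Finset α)
    (F' : Finset (Finset α × Finset α))
    (hB : ∀ A ∈ F', IsBisetOn T A) (hcross : Crossing T F') (s : α) (hs : s ∈ T) :
    ((((F'.filter fun A => s ∈ A.1).image fun A => T \ A.2).filter fun Z =>
        ∀ W ∈ (F'.filter fun A => s ∈ A.1).image fun A => T \ A.2, ¬ W ⊂ Z :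
        Finset (Finset α)) : Set (Finset α)).Pairwise Disjoint ∧
    ((((F'.filter fun A => s ∈ A.1).image fun A => T \ A.2).filter fun Z =>
        ∀ W ∈ (F'.filter fun A => s ∈ A.1).image fun A => T \ A.2, ¬ W ⊂ Z)).card
      ≤ nuBiset (revFam T F') := by
  classical
  set Img := (F'.filter fun A => s ∈ A.1).image fun A => T \ A.2 with hImg
  set M := Img.filter fun Z => ∀ W ∈ Img, ¬ W ⊂ Z with hM
  have key : ∀ Z1 ∈ M, ∀ Z2 ∈ M, (Z1 ∩ Z2).Nonempty → Z1 ⊆ Z2 := by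
    intro Z1 hZ1 Z2 hZ2 hne
    rw [hM, mem_filter] at hZ1 hZ2
    obtain ⟨hZ1I, hZ1min⟩ := hZ1
    obtain ⟨hZ2I, _⟩ := hZ2
    rw [hImg, mem_image] at hZ1I hZ2I
    obtain ⟨A, hA, rfl⟩ := hZ1I
    obtain ⟨B, hB', rfl⟩ := hZ2I
    rw [mem_filter] at hA hB'
    have hs1 : (A.1 ∩ B.1).Nonempty := ⟨s, mem_inter.2 ⟨hA.2, hB'.2⟩⟩
    obtain ⟨_, hU⟩ := hcross A hA.1 B hB'.1 hs1 hne
    have hUimg : T \ (A.2 ∪ B.2) ∈ Img := by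
      rw [hImg, mem_image]
      exact ⟨(A.1 ∪ B.1, A.2 ∪ B.2),
        mem_filter.2 ⟨hU, mem_union.2 (Or.inl hA.2)⟩, rfl⟩
    have hsub : T \ (A.2 ∪ B.2) ⊆ T \ A.2 :=
      sdiff_subset_sdiff (Finset.Subset.refl T) subset_union_left
    have hnss := hZ1min _ hUimg
    have heq : T \ (A.2 ∪ B.2) = T \ A.2 := by
      by_contra h
      exact hnss (ssubset_of_subset_of_ne hsub h)
    rw [← heq]
    exact sdiff_subset_sdiff (Finset.Subset.refl T) subset_union_right
  have hpw : ((M : Finset (Finset α)) : Set (Finset α)).Pairwise Disjoint := by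
    intro Z1 h1 Z2 h2 hne12
    by_contra hnd
    obtain ⟨x, hx1, hx2⟩ := Finset.not_disjoint_iff.1 hnd
    have h12 : (Z1 ∩ Z2).Nonempty := ⟨x, mem_inter.2 ⟨hx1, hx2⟩⟩
    have h21 : (Z2 ∩ Z1).Nonempty := ⟨x, mem_inter.2 ⟨hx2, hx1⟩⟩
    exact hne12 (Finset.Subset.antisymm (key _ h1 _ h2 h12) (key _ h2 _ h1 h21))
  refine ⟨hpw, ?_⟩
  -- build a representative subfamily of the reverse family
  have hrep : ∀ Z ∈ M, ∃ A, A ∈ F' ∧ T \ A.2 = Z := by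
    intro Z hZ
    rw [hM, mem_filter, hImg, mem_image] at hZ
    obtain ⟨⟨A, hA, rfl⟩, -⟩ := hZ
    exact ⟨A, (mem_filter.1 hA).1, rfl⟩
  let g : Finset α → Finset α × Finset α := fun Z =>
    if h : ∃ A, A ∈ F' ∧ T \ A.2 = Z then (Z, T \ h.choose.1) else (Z, Z)
  have hfst : ∀ Z, (g Z).1 = Z := by
    intro Z
    by_cases h : ∃ A, A ∈ F' ∧ T \ A.2 = Z
    · simp only [g, dif_pos h]
    · simp only [g, dif_neg h]
  set G := M.image g with hG
  have hcard : G.card = M.card :=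
    Finset.card_image_of_injOn (fun a _ b _ h => by rw [← hfst a, ← hfst b, h])
  have hGsub : G ⊆ revFam T F' := by
    intro x hx
    rw [hG, mem_image] at hx
    obtain ⟨Z, hZ, rfl⟩ := hx
    have h : ∃ A, A ∈ F' ∧ T \ A.2 = Z := hrep Z hZ
    have := h.choose_spec
    simp only [g, dif_pos h]
    rw [revFam, mem_image]
    exact ⟨h.choose, this.1, by rw [this.2]⟩
  have hGpw : ((G : Finset (Finset α × Finset α)) : Set (Finset α × Finset α)).Pairwise
      (fun A B => Disjoint A.1 B.1) := by
    intro x hx y hy hxy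
    rw [hG] at hx hy
    obtain ⟨Z1, hZ1, rfl⟩ := mem_image.1 (by exact_mod_cast hx)
    obtain ⟨Z2, hZ2, rfl⟩ := mem_image.1 (by exact_mod_cast hy)
    rw [hfst, hfst]
    exact hpw (by exact_mod_cast hZ1) (by exact_mod_cast hZ2)
      (fun h => hxy (by rw [h]))
  calc M.card = G.card := hcard.symm
    _ ≤ nuBiset (revFam T F') := by
        have h1 := Finset.le_sup (f := fun (H : Finset (Finset α × Finset α)) =>
          if (H : Set (Finset α × Finset α)).Pairwise
          (fun A B => Disjoint A.1 B.1) then H.card else 0) (mem_powerset.2 hGsub)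
        simp only [if_pos hGpw] at h1
        exact h1
end

section
/- Let F be a k-regular biset-family on a finite set T with k < |T|, and suppose that for every possible edge e on T, ν(F^k restricted to members not covered by e) = ν(F^k). Then ν(F^k) ≤ |T|/(|T|−k), i.e., (|T|−k)·ν(F^k) ≤ |T|. -/
open Finset
open scoped Classical

/-
The inner parts of `F^k` are closed under intersections of intersecting pairs, so its
inclusion-minimal inner parts (the cores) are pairwise disjoint and `ν(F^k)` is their number.
For a core `C` let `U_C` be the union of the inner parts of the members of `F^k` containing `C`
and no other core. If `|U_C| + k < |T|`, regularity puts the union of these members into `F`;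
its boundary has at most `k` elements, so some `v ∈ T` lies outside all their outer parts and an
edge from `C` to `v` covers all of them. Every member it leaves contains a core other than `C`,
so `ν` drops below the number of cores. Hence `|U_C| ≥ |T| - k`, and the `U_C` are pairwise
disjoint subsets of `T`.
-/

section Packing

variable {α : Type*} [DecidableEq α]

def InnerDisjoint (G : Finset (Finset α × Finset α)) : Prop :=
  (G : Set (Finset α × Finset α)).Pairwise fun A B => Disjoint A.1 B.1

theorem nuBiset_le {P : Finset (Finset α × Finset α)} {n : ℕ}
    (h : ∀ G ⊆ P, InnerDisjoint G → G.card ≤ n) : nuBiset P ≤ n :=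
  Finset.sup_le fun G hG => by
    split_ifs with hG'
    · exact h G (mem_powerset.1 hG) hG'
    · exact n.zero_le

theorem card_le_nuBiset {P G : Finset (Finset α × Finset α)} (hGP : G ⊆ P)
    (hG : InnerDisjoint G) : G.card ≤ nuBiset P :=
  le_sup_of_le (mem_powerset.2 hGP) (if_pos hG).ge

theorem card_le_card_of_forall_exists_subset {G : Finset (Finset α × Finset α)}
    {𝒟 : Finset (Finset α)} (hG : InnerDisjoint G) (h𝒟 : ∀ D ∈ 𝒟, D.Nonempty)
    (hcover : ∀ A ∈ G, ∃ D ∈ 𝒟, D ⊆ A.1) : G.card ≤ 𝒟.card :=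
  card_le_card_of_forall_subsingleton (fun A D => D ⊆ A.1) hcover fun D hD A hA B hB => by
    simp only [Set.mem_ofPred_eq] at hA hB
    by_contra hAB
    obtain ⟨x, hx⟩ := h𝒟 D hD
    exact disjoint_left.1 (hG hA.1 hB.1 hAB) (hA.2 hx) (hB.2 hx)

theorem nuBiset_le_card_of_forall_exists_subset {P : Finset (Finset α × Finset α)}
    {𝒟 : Finset (Finset α)} (h𝒟 : ∀ D ∈ 𝒟, D.Nonempty)
    (hcover : ∀ A ∈ P, ∃ D ∈ 𝒟, D ⊆ A.1) : nuBiset P ≤ 𝒟.card :=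
  nuBiset_le fun _ hGP hG =>
    card_le_card_of_forall_exists_subset hG h𝒟 fun A hA => hcover A (hGP hA)

end Packing

section Cores

variable {α : Type*} [DecidableEq α] {P : Finset (Finset α × Finset α)} {C D : Finset α}

noncomputable def cores (P : Finset (Finset α × Finset α)) : Finset (Finset α) :=
  (P.image Prod.fst).filter (Minimal (· ∈ P.image Prod.fst))

def InterClosed (P : Finset (Finset α × Finset α)) : Prop :=
  ∀ A ∈ P, ∀ B ∈ P, (A.1 ∩ B.1).Nonempty → (A.1 ∩ B.1, A.2 ∩ B.2) ∈ P

theorem exists_mem_cores_subset {A : Finset α × Finset α} (hA : A ∈ P) :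
    ∃ C ∈ cores P, C ⊆ A.1 := by
  obtain ⟨C, hCA, hC⟩ :=
    exists_minimal_le_of_wellFoundedLT (· ∈ P.image Prod.fst) A.1 (mem_image_of_mem _ hA)
  exact ⟨C, mem_filter.2 ⟨hC.prop, hC⟩, hCA⟩

theorem exists_fst_eq_of_mem_cores (hC : C ∈ cores P) : ∃ A ∈ P, A.1 = C :=
  mem_image.1 (mem_filter.1 hC).1

theorem nonempty_of_mem_cores (hne : ∀ A ∈ P, A.1.Nonempty) (hC : C ∈ cores P) :
    C.Nonempty := by
  obtain ⟨A, hA, rfl⟩ := exists_fst_eq_of_mem_cores hC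
  exact hne A hA

theorem disjoint_of_mem_cores (hP : InterClosed P) (hC : C ∈ cores P) (hD : D ∈ cores P)
    (hCD : C ≠ D) : Disjoint C D := by
  by_contra h
  obtain ⟨A, hA, rfl⟩ := exists_fst_eq_of_mem_cores hC
  obtain ⟨B, hB, rfl⟩ := exists_fst_eq_of_mem_cores hD
  have hAB := mem_image_of_mem Prod.fst (hP A hA B hB (not_disjoint_iff_nonempty_inter.1 h))
  exact hCD <| ((mem_filter.1 hC).2.eq_of_le hAB inter_subset_left).symm.trans
    ((mem_filter.1 hD).2.eq_of_le hAB inter_subset_right)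

theorem nuBiset_eq_card_cores (hne : ∀ A ∈ P, A.1.Nonempty) (hP : InterClosed P) :
    nuBiset P = (cores P).card := by
  refine le_antisymm (nuBiset_le_card_of_forall_exists_subset
    (fun _ => nonempty_of_mem_cores hne) fun _ => exists_mem_cores_subset) ?_
  choose! f hfP hf using fun C (hC : C ∈ cores P) => exists_fst_eq_of_mem_cores hC
  have hinj : Set.InjOn f (cores P) := fun C hC D hD h => (hf C hC).symm.trans (h ▸ hf D hD)
  rw [← card_image_of_injOn hinj]
  refine card_le_nuBiset (image_subset_iff.2 hfP) ?_
  simp only [InnerDisjoint, coe_image]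
  rintro _ ⟨C, hC, rfl⟩ _ ⟨D, hD, rfl⟩ hCD
  rw [hf C hC, hf D hD]
  exact disjoint_of_mem_cores hP hC hD fun h => hCD (h ▸ rfl)

noncomputable def halo (P : Finset (Finset α × Finset α)) (C : Finset α) :
    Finset (Finset α × Finset α) :=
  P.filter fun A => C ⊆ A.1 ∧ ∀ D ∈ cores P, D ⊆ A.1 → D = C

noncomputable def haloUnion (P : Finset (Finset α × Finset α)) (C : Finset α) : Finset α :=
  (halo P C).sup Prod.fst

theorem halo_nonempty (hC : C ∈ cores P) : (halo P C).Nonempty := by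
  obtain ⟨A, hA, hAC⟩ := exists_fst_eq_of_mem_cores hC
  refine ⟨A, mem_filter.2 ⟨hA, hAC.ge, fun D hD hDA => ?_⟩⟩
  exact (mem_filter.1 hC).2.eq_of_le (mem_filter.1 hD).1 (hAC ▸ hDA)

theorem exists_mem_erase_cores_subset {A : Finset α × Finset α} (hA : A ∈ P)
    (hAC : A ∉ halo P C) : ∃ D ∈ (cores P).erase C, D ⊆ A.1 := by
  obtain ⟨D, hD, hDA⟩ := exists_mem_cores_subset hA
  by_cases hDC : D = C
  · subst hDC
    simp only [halo, mem_filter, hA, hDA, true_and, not_forall] at hAC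
    obtain ⟨D', hD', hD'A, hD'D⟩ := hAC
    exact ⟨D', mem_erase.2 ⟨hD'D, hD'⟩, hD'A⟩
  · exact ⟨D, mem_erase.2 ⟨hDC, hD⟩, hDA⟩

theorem nuBiset_lt_of_forall_notMem_halo {Q : Finset (Finset α × Finset α)}
    (hne : ∀ A ∈ P, A.1.Nonempty) (hP : InterClosed P) (hQP : Q ⊆ P) (hC : C ∈ cores P)
    (hQ : ∀ A ∈ Q, A ∉ halo P C) : nuBiset Q < nuBiset P :=
  calc nuBiset Q ≤ ((cores P).erase C).card :=
        nuBiset_le_card_of_forall_exists_subset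
          (fun _ hD => nonempty_of_mem_cores hne (mem_of_mem_erase hD))
          fun A hA => exists_mem_erase_cores_subset (hQP hA) (hQ A hA)
    _ < (cores P).card := card_erase_lt_of_mem hC
    _ = nuBiset P := (nuBiset_eq_card_cores hne hP).symm

theorem disjoint_haloUnion (hP : InterClosed P) (hCD : C ≠ D) :
    Disjoint (haloUnion P C) (haloUnion P D) := by
  refine disjoint_left.2 fun x hxC hxD => ?_
  obtain ⟨A, hA, hxA⟩ := mem_sup.1 hxC
  obtain ⟨B, hB, hxB⟩ := mem_sup.1 hxD
  obtain ⟨hAP, -, hAC⟩ := mem_filter.1 hA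
  obtain ⟨hBP, -, hBD⟩ := mem_filter.1 hB
  obtain ⟨E, hE, hEAB⟩ :=
    exists_mem_cores_subset (hP A hAP B hBP ⟨x, mem_inter.2 ⟨hxA, hxB⟩⟩)
  exact hCD ((hAC E hE (hEAB.trans inter_subset_left)).symm.trans
    (hBD E hE (hEAB.trans inter_subset_right)))

theorem haloUnion_subset {T : Finset α} (hB : ∀ A ∈ P, IsBisetOn T A) : haloUnion P C ⊆ T :=
  Finset.sup_le fun A hA => (hB A (mem_filter.1 hA).1).1.trans (hB A (mem_filter.1 hA).1).2

end Cores

section Regular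

variable {α : Type*} [DecidableEq α] {T : Finset α} {k : ℕ}
  {F : Finset (Finset α × Finset α)}

theorem interClosed_smallPart (hreg : KRegular T k F) : InterClosed (smallPart T k F) := by
  intro A hA B hB hAB
  simp only [smallPart, mem_filter] at hA hB ⊢
  have hunion : (A.1 ∪ B.1).card + (A.1 ∩ B.1).card = A.1.card + B.1.card :=
    card_union_add_card_inter _ _
  have hinter : (A.1 ∩ B.1).card ≤ A.1.card := card_le_card inter_subset_left
  have hpos : 0 < (A.1 ∩ B.1).card := hAB.card_pos
  exact ⟨(hreg.2 A hA.1 B hB.1 hAB (by omega)).1, by omega⟩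

theorem sup_mem_of_forall_subset_fst (hreg : KRegular T k F) {H : Finset (Finset α × Finset α)}
    (hHF : H ⊆ F) (hH : H.Nonempty) {C : Finset α} (hC : C.Nonempty)
    (hCH : ∀ A ∈ H, C ⊆ A.1) (hcard : (H.sup Prod.fst).card + k + 1 ≤ T.card) :
    (H.sup Prod.fst, H.sup Prod.snd) ∈ F := by
  induction hH using Finset.Nonempty.cons_induction with
  | singleton A => simpa using hHF (mem_singleton_self A)
  | cons A H hAH hH ih =>
    rw [cons_subset] at hHF
    simp only [mem_cons, forall_eq_or_imp] at hCH
    rw [sup_cons] at hcard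
    have hHmem := ih hHF.2 hCH.2 <| by
      have := card_le_card (le_sup_right : H.sup Prod.fst ≤ A.1 ⊔ _)
      omega
    obtain ⟨x, hx⟩ := hC
    obtain ⟨B, hB⟩ := hH
    have hmeet : (A.1 ∩ H.sup Prod.fst).Nonempty :=
      ⟨x, mem_inter.2 ⟨hCH.1 hx, le_sup (f := Prod.fst) hB (hCH.2 B hB hx)⟩⟩
    simpa only [sup_cons, sup_eq_union] using (hreg.2 A hHF.1 _ hHmem hmeet hcard).2

theorem card_le_card_haloUnion_add (hB : ∀ A ∈ F, IsBisetOn T A)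
    (hne : ∀ A ∈ F, A.1.Nonempty) (hreg : KRegular T k F)
    (hyp : ∀ u ∈ T, ∀ v ∈ T,
      nuBiset ((smallPart T k F).filter fun A => ¬ EdgeCovers T (u, v) A)
        = nuBiset (smallPart T k F))
    {C : Finset α} (hC : C ∈ cores (smallPart T k F)) :
    T.card ≤ (haloUnion (smallPart T k F) C).card + k := by
  set P := smallPart T k F
  have hPF : P ⊆ F := filter_subset _ _
  have hneP : ∀ A ∈ P, A.1.Nonempty := fun A hA => hne A (hPF hA)
  set H := halo P C
  by_contra! hsmall
  change (H.sup Prod.fst).card + k < T.card at hsmall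
  obtain ⟨u, hu⟩ := nonempty_of_mem_cores hneP hC
  have hUF : (H.sup Prod.fst, H.sup Prod.snd) ∈ F :=
    sup_mem_of_forall_subset_fst hreg ((filter_subset _ _).trans hPF) (halo_nonempty hC)
      ⟨u, hu⟩ (fun A hA => (mem_filter.1 hA).2.1) (by omega)
  have hout : (H.sup Prod.snd).card < T.card :=
    calc (H.sup Prod.snd).card
        ≤ (H.sup Prod.snd \ H.sup Prod.fst).card + (H.sup Prod.fst).card :=
          card_le_card_sdiff_add_card
      _ ≤ k + (H.sup Prod.fst).card := add_le_add_left (hreg.1 _ hUF) _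
      _ < T.card := by omega
  obtain ⟨v, hvT, hv⟩ := exists_mem_notMem_of_card_lt_card hout
  have huT : u ∈ T := by
    obtain ⟨A, hA, rfl⟩ := exists_fst_eq_of_mem_cores hC
    exact (hB A (hPF hA)).2 ((hB A (hPF hA)).1 hu)
  refine (nuBiset_lt_of_forall_notMem_halo hneP (interClosed_smallPart hreg)
    (filter_subset _ P) hC fun A hA hAH => ?_).ne (hyp u huT v hvT)
  exact (mem_filter.1 hA).2
    ⟨(mem_filter.1 hAH).2.1 hu,
      mem_sdiff.2 ⟨hvT, fun hvA => hv (le_sup (f := Prod.snd) hAH hvA)⟩⟩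

end Regular

theorem stmt_7_general {α : Type*} [DecidableEq α] (T : Finset α) (k : ℕ)
    (F : Finset (Finset α × Finset α))
    (hB : ∀ A ∈ F, IsBisetOn T A)
    (hne : ∀ A ∈ F, A.1.Nonempty)
    (hreg : KRegular T k F)
    (hyp : ∀ u ∈ T, ∀ v ∈ T,
      nuBiset ((smallPart T k F).filter fun A => ¬ EdgeCovers T (u, v) A)
        = nuBiset (smallPart T k F)) :
    (T.card - k) * nuBiset (smallPart T k F) ≤ T.card := by
  set P := smallPart T k F
  have hPF : P ⊆ F := filter_subset _ _
  have hP : InterClosed P := interClosed_smallPart hreg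
  rw [nuBiset_eq_card_cores (fun A hA => hne A (hPF hA)) hP]
  calc (T.card - k) * (cores P).card = ∑ _C ∈ cores P, (T.card - k) := by
        rw [sum_const, smul_eq_mul, mul_comm]
    _ ≤ ∑ C ∈ cores P, (haloUnion P C).card :=
        sum_le_sum fun C hC => Nat.sub_le_of_le_add (card_le_card_haloUnion_add hB hne hreg hyp hC)
    _ = ((cores P).biUnion (haloUnion P)).card :=
        (card_biUnion fun _ _ _ _ hCD => disjoint_haloUnion hP hCD).symm
    _ ≤ T.card := card_le_card (biUnion_subset.2 fun _ _ =>
        haloUnion_subset fun A hA => hB A (hPF hA))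

/-- If no single edge on `T` decreases `ν(F^k)`, then `ν(F^k) ≤ |T|/(|T|-k)`,
i.e. `(|T|-k)·ν(F^k) ≤ |T|`. -/
theorem stmt_7 {α : Type*} [DecidableEq α] (T : Finset α) (k : ℕ) (hk : k < T.card)
    (F : Finset (Finset α × Finset α))
    (hB : ∀ A ∈ F, IsBisetOn T A)
    (hne : ∀ A ∈ F, A.1.Nonempty)
    (hreg : KRegular T k F)
    (hyp : ∀ u ∈ T, ∀ v ∈ T,
      nuBiset ((smallPart T k F).filter fun A => ¬ EdgeCovers T (u, v) A)
        = nuBiset (smallPart T k F)) :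
    (T.card - k) * nuBiset (smallPart T k F) ≤ T.card :=
  stmt_7_general T k F hB hne hreg hyp
end

section
/- With α = (1 + k/n)/2, β = 1/2, γ = 1 − k/n = 2(1−α), δ = 1, n = |T| > k ≥ 0, suppose ν ≥ (2+β)/(1−α), ν_0 = ν, ν_{i+1} ≤ α ν_i + β, and s_i = γ ν_{i−1} − 1. Let j be the least integer with α^j (ν − β/(1−α)) ≤ 2/(1−α). Then ν_j ≤ 5n/(n−k) and s_1 + ... + s_j ≤ 2(ν − n/(n−k)). -/
/-!
The affine recursion `ν_{i+1} ≤ α ν_i + β` contracts towards its fixed point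
`c = β/(1-α) = n/(n-k)`, so `ν_i - c ≤ α^i (ν - c)`. The choice of `j` then gives
`ν_j ≤ c + 2/(1-α) = 5n/(n-k)`. Since `γ c = δ`, each `s_i ≤ γ α^{i-1} (ν - c)`, and the
geometric series sums to at most `γ (ν - c)/(1-α) = 2(ν - c)`.
-/

open Finset

theorem Finset.sum_Icc_one_comp_sub_one {M : Type*} [AddCommMonoid M] (f : ℕ → M) (j : ℕ) :
    ∑ i ∈ Icc 1 j, f (i - 1) = ∑ i ∈ range j, f i := by
  induction j with
  | zero => simp
  | succ j ih => rw [sum_Icc_succ_top (by omega), sum_range_succ, ih, Nat.add_sub_cancel]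

section AffineRecurrence

variable {K : Type*} [Field K] [LinearOrder K] [IsStrictOrderedRing K] {a b c : K} {v : ℕ → K}

theorem sub_le_pow_mul_of_le_affine (ha : 0 ≤ a) (hc : a * c + b = c)
    (hrec : ∀ i, v (i + 1) ≤ a * v i + b) (i : ℕ) : v i - c ≤ a ^ i * (v 0 - c) := by
  induction i with
  | zero => simp
  | succ i ih =>
    calc v (i + 1) - c ≤ a * (v i - c) := by linarith [hrec i]
      _ ≤ a * (a ^ i * (v 0 - c)) := mul_le_mul_of_nonneg_left ih ha
      _ = a ^ (i + 1) * (v 0 - c) := by ring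

theorem sum_range_mul_sub_le_of_le_affine (ha0 : 0 ≤ a) (ha1 : a < 1) (hc : a * c + b = c)
    (hrec : ∀ i, v (i + 1) ≤ a * v i + b) (hv : c ≤ v 0) (j : ℕ) :
    ∑ i ∈ range j, (1 - a) * (v i - c) ≤ v 0 - c :=
  calc ∑ i ∈ range j, (1 - a) * (v i - c)
      ≤ ∑ i ∈ range j, (1 - a) * (a ^ i * (v 0 - c)) := by
        gcongr with i
        exact sub_le_pow_mul_of_le_affine ha0 hc hrec i
    _ = (1 - a ^ j) * (v 0 - c) := by rw [← mul_sum, ← sum_mul, ← mul_assoc, mul_neg_geom_sum]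
    _ ≤ v 0 - c := by nlinarith [pow_nonneg ha0 j]

end AffineRecurrence

theorem stmt_11_general (n k : ℝ) (hk0 : 0 ≤ k) (hkn : k < n)
    (v : ℕ → ℝ) (ν : ℝ) (h0 : v 0 = ν)
    (hrec : ∀ i, v (i + 1) ≤ ((1 + k / n) / 2) * v i + 1 / 2)
    (hν : (2 + 1 / 2) / (1 - (1 + k / n) / 2) ≤ ν)
    (j : ℕ)
    (hj : ((1 + k / n) / 2) ^ j * (ν - (1 / 2) / (1 - (1 + k / n) / 2))
        ≤ 2 / (1 - (1 + k / n) / 2)) :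
    v j ≤ 5 * n / (n - k) ∧
    ∑ i ∈ Finset.Icc 1 j, (2 * (1 - (1 + k / n) / 2) * v (i - 1) - 1)
      ≤ 2 * (ν - n / (n - k)) := by
  subst h0
  have hn : 0 < n := hk0.trans_lt hkn
  have hnk : 0 < n - k := sub_pos.mpr hkn
  have hgap : 1 - (1 + k / n) / 2 = (n - k) / (2 * n) := by field_simp; ring
  have hβ : 1 / 2 / ((n - k) / (2 * n)) = n / (n - k) := by field_simp
  have hbound : 2 / ((n - k) / (2 * n)) = 4 * n / (n - k) := by field_simp; ring
  have hstart : (2 + 1 / 2) / ((n - k) / (2 * n)) = 4 * n / (n - k) + n / (n - k) := by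
    field_simp; ring
  rw [hgap, hstart] at hν
  rw [hgap, hβ, hbound] at hj
  set a := (1 + k / n) / 2
  have ha0 : 0 ≤ a := by positivity
  have ha1 : a < 1 := by linarith [show 0 < (n - k) / (2 * n) by positivity]
  have hgap_c : (1 - a) * (n / (n - k)) = 1 / 2 := by rw [hgap]; field_simp
  have hfix : a * (n / (n - k)) + 1 / 2 = n / (n - k) := by linear_combination -hgap_c
  have hcν : n / (n - k) ≤ v 0 := by linarith [show 0 < 4 * n / (n - k) by positivity]
  constructor
  · have : 5 * n / (n - k) = 4 * n / (n - k) + n / (n - k) := by ring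
    linarith [sub_le_pow_mul_of_le_affine ha0 hfix hrec j]
  · calc ∑ i ∈ Icc 1 j, (2 * (1 - a) * v (i - 1) - 1)
        = 2 * ∑ i ∈ range j, (1 - a) * (v i - n / (n - k)) := by
          rw [sum_Icc_one_comp_sub_one (fun i => 2 * (1 - a) * v i - 1), mul_sum]
          refine sum_congr rfl fun i _ => ?_
          linear_combination 2 * hgap_c
      _ ≤ 2 * (v 0 - n / (n - k)) := by
          linarith [sum_range_mul_sub_le_of_le_affine ha0 ha1 hfix hrec hcν j]

/-- With `α = (1+k/n)/2`, `β = 1/2`, `γ = 2(1-α)`, `δ = 1`, `0 ≤ k < n`,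
`ν ≥ (2+β)/(1-α)`, `ν₀ = ν`, `ν_{i+1} ≤ α·ν_i + β`, `s_i = γ·ν_{i-1} - 1`, and `j`
the least integer with `α^j·(ν - β/(1-α)) ≤ 2/(1-α)`, one has
`ν_j ≤ 5n/(n-k)` and `s_1 + ... + s_j ≤ 2·(ν - n/(n-k))`. -/
theorem stmt_11 (n k : ℝ) (hk0 : 0 ≤ k) (hkn : k < n)
    (v : ℕ → ℝ) (ν : ℝ) (h0 : v 0 = ν)
    (hrec : ∀ i, v (i + 1) ≤ ((1 + k / n) / 2) * v i + 1 / 2)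
    (hν : (2 + 1 / 2) / (1 - (1 + k / n) / 2) ≤ ν)
    (j : ℕ)
    (hj : ((1 + k / n) / 2) ^ j * (ν - (1 / 2) / (1 - (1 + k / n) / 2))
        ≤ 2 / (1 - (1 + k / n) / 2))
    (hjmin : ∀ i : ℕ, i < j →
      ¬ (((1 + k / n) / 2) ^ i * (ν - (1 / 2) / (1 - (1 + k / n) / 2))
        ≤ 2 / (1 - (1 + k / n) / 2))) :
    v j ≤ 5 * n / (n - k) ∧
    ∑ i ∈ Finset.Icc 1 j, (2 * (1 - (1 + k / n) / 2) * v (i - 1) - 1)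
      ≤ 2 * (ν - n / (n - k)) :=
  stmt_11_general n k hk0 hkn v ν h0 hrec hν j hj
end

section
/- Let F be a k-regular biset-family on finite T with k < |T|, and let T^k be an inclusion-minimal transversal of F^k (a minimal subset of T intersecting the inner part of every member of F^k). Then |T^k| ≤ ν(F^k), the maximum number of members of F^k with pairwise-disjoint inner parts; in fact |T^k| = ν(F^k). -/
open Finset
open scoped Classical

/-- An inclusion-minimal transversal `T^k` of `F^k` (a minimal subset of `T`
intersecting the inner part of every member of `F^k`) satisfies `|T^k| = ν(F^k)`. -/
theorem stmt_12 {α : Type*} [DecidableEq α] (T : Finset α) (k : ℕ) (hk : k < T.card)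
    (F : Finset (Finset α × Finset α))
    (hB : ∀ A ∈ F, IsBisetOn T A) (hreg : KRegular T k F)
    (Tk : Finset α) (hTk : Tk ⊆ T)
    (htrans : ∀ A ∈ smallPart T k F, (Tk ∩ A.1).Nonempty)
    (hmin : ∀ S ⊂ Tk, ∃ A ∈ smallPart T k F, S ∩ A.1 = ∅) :
    Tk.card = nuBiset (smallPart T k F) := by
  classical
  -- Key lemma: F^k is closed under intersection of intersecting pairs.
  have key : ∀ A ∈ smallPart T k F, ∀ B ∈ smallPart T k F, (A.1 ∩ B.1).Nonempty →
      (A.1 ∩ B.1, A.2 ∩ B.2) ∈ smallPart T k F := by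
    intro A hA B hB hne
    simp only [smallPart, mem_filter] at hA hB ⊢
    have h1 := Finset.card_union_add_card_inter A.1 B.1
    have h2 : 1 ≤ (A.1 ∩ B.1).card := Finset.card_pos.mpr hne
    have hY : (A.1 ∪ B.1).card + k + 1 ≤ T.card := by omega
    obtain ⟨hint, _⟩ := hreg.2 A hA.1 B hB.1 hne hY
    have h3 : (A.1 ∩ B.1).card ≤ A.1.card :=
      Finset.card_le_card Finset.inter_subset_left
    exact ⟨hint, by omega⟩
  -- upper bound: ν ≤ |Tk|
  have hub : nuBiset (smallPart T k F) ≤ Tk.card := by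
    apply Finset.sup_le
    intro G hG
    rw [Finset.mem_powerset] at hG
    split_ifs with hpw
    · rcases G.eq_empty_or_nonempty with hGe | ⟨A0, hA0⟩
      · simp [hGe]
      obtain ⟨t0, ht0⟩ := htrans A0 (hG hA0)
      set f : Finset α × Finset α → α := fun A =>
        if h : (Tk ∩ A.1).Nonempty then h.choose else t0 with hf
      apply Finset.card_le_card_of_injOn f
      · intro A hA
        have h : (Tk ∩ A.1).Nonempty := htrans A (hG hA)
        have := h.choose_spec
        simp only [hf, dif_pos h]
        exact (Finset.mem_inter.mp this).1
      · intro A hA B hB hAB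
        by_contra hne
        have hA' : (Tk ∩ A.1).Nonempty := htrans A (hG hA)
        have hB' : (Tk ∩ B.1).Nonempty := htrans B (hG hB)
        have hsA := hA'.choose_spec
        have hsB := hB'.choose_spec
        simp only [hf, dif_pos hA', dif_pos hB'] at hAB
        have hd := hpw hA hB hne
        have : hA'.choose ∈ A.1 ∩ B.1 := by
          rw [Finset.mem_inter]
          exact ⟨(Finset.mem_inter.mp hsA).2, hAB ▸ (Finset.mem_inter.mp hsB).2⟩
        exact (Finset.disjoint_left.mp hd (Finset.mem_inter.mp this).1)
          (Finset.mem_inter.mp this).2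
    · exact Nat.zero_le _
  -- lower bound: for each t ∈ Tk pick a witness A with Tk ∩ A.1 = {t}
  have hsel : ∀ t ∈ Tk, ∃ A ∈ smallPart T k F, Tk ∩ A.1 = {t} := by
    intro t ht
    obtain ⟨A, hA, hempty⟩ := hmin (Tk.erase t) (Finset.erase_ssubset ht)
    refine ⟨A, hA, ?_⟩
    have hne := htrans A hA
    have hsub : Tk ∩ A.1 ⊆ {t} := by
      intro x hx
      rw [Finset.mem_inter] at hx
      rw [Finset.mem_singleton]
      by_contra hxt
      have : x ∈ Tk.erase t ∩ A.1 :=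
        Finset.mem_inter.mpr ⟨Finset.mem_erase.mpr ⟨hxt, hx.1⟩, hx.2⟩
      rw [hempty] at this
      exact absurd this (Finset.notMem_empty x)
    rcases Finset.subset_singleton_iff.mp hsub with h | h
    · exact absurd h hne.ne_empty
    · exact h
  choose g hg1 hg2 using hsel
  set f : α → Finset α × Finset α := fun t =>
    if h : t ∈ Tk then g t h else (∅, ∅) with hf
  have hfm : ∀ t (ht : t ∈ Tk), f t = g t ht := fun t ht => dif_pos ht
  have hfeq : ∀ t (ht : t ∈ Tk), Tk ∩ (f t).1 = {t} := by
    intro t ht; rw [hfm t ht]; exact hg2 t ht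
  have hfS : ∀ t (ht : t ∈ Tk), f t ∈ smallPart T k F := by
    intro t ht; rw [hfm t ht]; exact hg1 t ht
  have hinj : Set.InjOn f Tk := by
    intro t ht s hs hts
    have : ({t} : Finset α) = {s} := by
      rw [← hfeq t ht, ← hfeq s hs, hts]
    exact Finset.singleton_injective this
  set G := Tk.image f with hG
  have hGsub : G ⊆ smallPart T k F := by
    intro A hA
    obtain ⟨t, ht, rfl⟩ := Finset.mem_image.mp hA
    exact hfS t ht
  have hGpw : (G : Set (Finset α × Finset α)).Pairwise (fun A B => Disjoint A.1 B.1) := by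
    intro A hA B hB hAB
    simp only [hG, Finset.coe_image, Set.mem_image, Finset.mem_coe] at hA hB
    obtain ⟨t, ht, rfl⟩ := hA
    obtain ⟨s, hs, rfl⟩ := hB
    rw [Finset.disjoint_left]
    intro x hxA hxB
    have hne : ((f t).1 ∩ (f s).1).Nonempty := ⟨x, Finset.mem_inter.mpr ⟨hxA, hxB⟩⟩
    have hC := key _ (hfS t ht) _ (hfS s hs) hne
    obtain ⟨y, hy⟩ := htrans _ hC
    simp only [Finset.mem_inter] at hy
    have hyt : y ∈ Tk ∩ (f t).1 := Finset.mem_inter.mpr ⟨hy.1, hy.2.1⟩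
    have hys : y ∈ Tk ∩ (f s).1 := Finset.mem_inter.mpr ⟨hy.1, hy.2.2⟩
    rw [hfeq t ht, Finset.mem_singleton] at hyt
    rw [hfeq s hs, Finset.mem_singleton] at hys
    exact hAB (by rw [hyt.symm.trans hys])
  have hcard : G.card = Tk.card := Finset.card_image_of_injOn hinj
  have hlb : Tk.card ≤ nuBiset (smallPart T k F) := by
    rw [← hcard]
    calc G.card = if (G : Set (Finset α × Finset α)).Pairwise
          (fun A B => Disjoint A.1 B.1) then G.card else 0 := by rw [if_pos hGpw]
      _ ≤ nuBiset (smallPart T k F) := by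
        unfold nuBiset
        exact Finset.le_sup (f := fun (H : Finset (Finset α × Finset α)) => if (↑H : Set (Finset α × Finset α)).Pairwise
          (fun A B => Disjoint A.1 B.1) then H.card else 0)
          (Finset.mem_powerset.mpr hGsub)
  omega
end

section
/- Let G be a set family on ground set T that is closed under intersection of intersecting members (i.e., if X, Y ∈ G and X ∩ Y ≠ ∅ then X ∩ Y ∈ G), with ∅ ∉ G. If T' is an inclusion-minimal transversal of G, then |T'| equals the maximum number of pairwise-disjoint members of G. -/
open Finset
open scoped Classical

/-- `ν(G)`: the maximum number of pairwise-disjoint members of the set family `G`. -/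
noncomputable def nuSet {α : Type*} [DecidableEq α] (G : Finset (Finset α)) : ℕ :=
  G.powerset.sup fun H =>
    if (H : Set (Finset α)).Pairwise Disjoint then H.card else 0

/-- If `G` is a family of nonempty sets closed under intersection of intersecting
members, then any inclusion-minimal transversal `T'` of `G` satisfies
`|T'| = ν(G)`, the maximum number of pairwise-disjoint members. -/
theorem stmt_13 {α : Type*} [DecidableEq α] (T : Finset α) (G : Finset (Finset α))
    (hsub : ∀ X ∈ G, X ⊆ T)
    (hne : ∀ X ∈ G, X.Nonempty)
    (hclosed : ∀ X ∈ G, ∀ Y ∈ G, (X ∩ Y).Nonempty → X ∩ Y ∈ G)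
    (T' : Finset α) (hT' : T' ⊆ T)
    (htrans : ∀ X ∈ G, (T' ∩ X).Nonempty)
    (hmin : ∀ S ⊂ T', ∃ X ∈ G, S ∩ X = ∅) :
    T'.card = nuSet G := by
  classical
  -- For each t ∈ T' choose X_t ∈ G with T' ∩ X_t = {t}
  have hexists : ∀ t ∈ T', ∃ X ∈ G, T' ∩ X = {t} := by
    intro t ht
    obtain ⟨X, hX, hXe⟩ := hmin (T'.erase t) (erase_ssubset ht)
    refine ⟨X, hX, ?_⟩
    have h1 : T' ∩ X ⊆ {t} := by
      intro x hx
      simp only [mem_inter] at hx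
      simp only [mem_singleton]
      by_contra hxt
      have : x ∈ T'.erase t ∩ X := by
        simp [mem_erase, hx.1, hx.2, hxt]
      simp [hXe] at this
    obtain ⟨y, hy⟩ := htrans X hX
    have hyt : y = t := by simpa using h1 hy
    apply Subset.antisymm h1
    intro z hz
    rw [mem_singleton] at hz
    subst hz
    rwa [← hyt]
  choose! f hfG hfT using hexists
  have hinj : Set.InjOn f T' := by
    intro s hs t ht hst
    have h1 := hfT s hs
    have h2 := hfT t ht
    rw [hst, h2] at h1
    simpa using h1.symm
  have hdisj : ((T'.image f : Finset (Finset α)) : Set (Finset α)).Pairwise Disjoint := by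
    intro X hX Y hY hXY
    simp only [coe_image, Set.mem_image, mem_coe] at hX hY
    obtain ⟨s, hs, rfl⟩ := hX
    obtain ⟨t, ht, rfl⟩ := hY
    rw [Finset.disjoint_left]
    intro a haX haY
    have hne' : (f s ∩ f t).Nonempty := ⟨a, mem_inter.mpr ⟨haX, haY⟩⟩
    have hmem := hclosed _ (hfG s hs) _ (hfG t ht) hne'
    obtain ⟨y, hy⟩ := htrans _ hmem
    simp only [mem_inter] at hy
    have hy1 : y ∈ T' ∩ f s := mem_inter.mpr ⟨hy.1, hy.2.1⟩
    have hy2 : y ∈ T' ∩ f t := mem_inter.mpr ⟨hy.1, hy.2.2⟩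
    rw [hfT s hs, mem_singleton] at hy1
    rw [hfT t ht, mem_singleton] at hy2
    exact hXY (by rw [← hy1, ← hy2])
  have hcard : (T'.image f).card = T'.card := Finset.card_image_of_injOn hinj
  apply le_antisymm
  · -- T'.card ≤ nuSet G via the image family
    have hmem : T'.image f ∈ G.powerset := by
      rw [mem_powerset]
      intro X hX
      simp only [mem_image] at hX
      obtain ⟨t, ht, rfl⟩ := hX
      exact hfG t ht
    have h := Finset.le_sup (f := fun H : Finset (Finset α) =>
      if ((H : Set (Finset α)).Pairwise Disjoint) then H.card else 0) hmem
    simp only [if_pos hdisj] at h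
    rw [← hcard]
    exact h
  · -- nuSet G ≤ T'.card
    apply Finset.sup_le
    intro H hH
    rw [mem_powerset] at hH
    split_ifs with hp
    · -- pick a point of T' in each member of H
      rcases H.eq_empty_or_nonempty with rfl | ⟨X0, hX0⟩
      · simp
      have : Nonempty α := ⟨(htrans X0 (hH hX0)).choose⟩
      have hpt : ∀ X, X ∈ H → ∃ y, y ∈ T' ∩ X := fun X hX => htrans X (hH hX)
      choose! g hg using hpt
      apply Finset.card_le_card_of_injOn g
      · intro X hX
        exact (mem_inter.mp (hg X hX)).1
      · intro X hX Y hY hgXY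
        by_contra hne'
        have hd := hp hX hY hne'
        rw [Finset.disjoint_left] at hd
        exact hd (mem_inter.mp (hg X (by simpa using hX))).2
          (hgXY ▸ (mem_inter.mp (hg Y (by simpa using hY))).2)
    · exact Nat.zero_le _
end

section
/- Let F be a set family on finite T with a fractional transversal of value τ (a function t: T → [0,1] with Σ_{v∈X} t(v) ≥ 1 for all X ∈ F), and suppose every element of T belongs to at most Δ members of F. Then the greedy algorithm yields a transversal of F of size at most τ·H(Δ), where H is the harmonic number; in particular, a transversal of size at most τ·H(Δ) exists. -/
open Finset

noncomputable def Hh (n : ℕ) : ℝ := ∑ i ∈ Finset.range n, (1 : ℝ) / (i + 1)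

lemma Hh_nonneg (n : ℕ) : 0 ≤ Hh n :=
  Finset.sum_nonneg fun i _ => by positivity

lemma Hh_mono {a b : ℕ} (h : a ≤ b) : Hh a ≤ Hh b :=
  Finset.sum_le_sum_of_subset_of_nonneg (Finset.range_subset_range.2 h)
    (fun i _ _ => by positivity)

lemma Hh_diff {a b k : ℕ} (hab : a ≤ b) (hbk : b ≤ k) (hk : 1 ≤ k) :
    ((b - a : ℕ) : ℝ) / k ≤ Hh b - Hh a := by
  have hsplit : Hh a + ∑ i ∈ Finset.Ico a b, (1 : ℝ) / (i + 1) = Hh b := by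
    unfold Hh
    simp only [Finset.range_eq_Ico]
    exact Finset.sum_Ico_consecutive _ (Nat.zero_le a) hab
  have hterm : ∀ i ∈ Finset.Ico a b, (1 : ℝ) / k ≤ (1 : ℝ) / (i + 1) := by
    intro i hi
    have hi' : i < b := (Finset.mem_Ico.1 hi).2
    have h1 : (i : ℝ) + 1 ≤ (k : ℝ) := by
      have : i + 1 ≤ k := le_trans hi' hbk
      exact_mod_cast this
    have h2 : (0 : ℝ) < (i : ℝ) + 1 := by positivity
    exact one_div_le_one_div_of_le h2 h1
  have hcard : (Finset.Ico a b).card • ((1 : ℝ) / k) ≤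
      ∑ i ∈ Finset.Ico a b, (1 : ℝ) / (i + 1) :=
    Finset.card_nsmul_le_sum _ _ _ hterm
  have hIco : (Finset.Ico a b).card = b - a := Nat.card_Ico a b
  have : ((b - a : ℕ) : ℝ) / k = (Finset.Ico a b).card • ((1 : ℝ) / k) := by
    rw [hIco, nsmul_eq_mul]; ring
  linarith [hcard, hsplit.symm.le]

lemma key {α : Type*} [DecidableEq α] (T : Finset α) (t : α → ℝ)
    (ht0 : ∀ v, 0 ≤ t v) :
    ∀ n (F : Finset (Finset α)), F.card ≤ n → (∀ X ∈ F, X ⊆ T) →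
      (∀ X ∈ F, 1 ≤ ∑ v ∈ X, t v) →
      ∃ T' ⊆ T, (∀ X ∈ F, (T' ∩ X).Nonempty) ∧
        (T'.card : ℝ) ≤ ∑ v ∈ T, t v * Hh ((F.filter fun X => v ∈ X).card) := by
  intro n
  induction n with
  | zero =>
    intro F hF _ _
    have hFe : F = ∅ := Finset.card_eq_zero.1 (Nat.le_zero.1 hF)
    subst hFe
    refine ⟨∅, Finset.empty_subset T, fun X hX => absurd hX (Finset.notMem_empty X), ?_⟩
    simpa using Finset.sum_nonneg fun v _ => mul_nonneg (ht0 v) (Hh_nonneg _)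
  | succ n ih =>
    intro F hF hsub hfrac
    by_cases hFe : F = ∅
    · subst hFe
      refine ⟨∅, Finset.empty_subset T, fun X hX => absurd hX (Finset.notMem_empty X), ?_⟩
      simpa using Finset.sum_nonneg fun v _ => mul_nonneg (ht0 v) (Hh_nonneg _)
    · obtain ⟨X₀, hX₀⟩ := Finset.nonempty_iff_ne_empty.2 hFe
      have hX₀ne : X₀.Nonempty := by
        rcases Finset.eq_empty_or_nonempty X₀ with h | h
        · exfalso; have := hfrac X₀ hX₀; rw [h] at this; simp at this; linarith
        · exact h
      obtain ⟨v₀, hv₀⟩ := hX₀ne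
      have hv₀T : v₀ ∈ T := hsub X₀ hX₀ hv₀
      have hTne : T.Nonempty := ⟨v₀, hv₀T⟩
      obtain ⟨v, hvT, hvmax⟩ := Finset.exists_max_image T
        (fun u => (F.filter fun X => u ∈ X).card) hTne
      set k := (F.filter fun X => v ∈ X).card with hk_def
      have hk1 : 1 ≤ k := by
        have h1 : 1 ≤ (F.filter fun X => v₀ ∈ X).card :=
          Finset.card_pos.2 ⟨X₀, Finset.mem_filter.2 ⟨hX₀, hv₀⟩⟩
        exact le_trans h1 (hvmax v₀ hv₀T)
      set F' := F.filter (fun X => v ∉ X) with hF'_def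
      have hsplitF : (F.filter fun X => v ∈ X).card + F'.card = F.card :=
        Finset.card_filter_add_card_filter_not _
      have hF'card : F'.card ≤ n := by omega
      obtain ⟨T'', hT''sub, hT''trans, hT''card⟩ := ih F' hF'card
        (fun X hX => hsub X (Finset.mem_filter.1 hX).1)
        (fun X hX => hfrac X (Finset.mem_filter.1 hX).1)
      refine ⟨insert v T'', Finset.insert_subset hvT hT''sub, ?_, ?_⟩
      · intro X hX
        by_cases hvX : v ∈ X
        · exact ⟨v, Finset.mem_inter.2 ⟨Finset.mem_insert_self v T'', hvX⟩⟩
        · obtain ⟨u, hu⟩ := hT''trans X (Finset.mem_filter.2 ⟨hX, hvX⟩)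
          exact ⟨u, Finset.mem_inter.2 ⟨Finset.mem_insert_of_mem (Finset.mem_inter.1 hu).1,
            (Finset.mem_inter.1 hu).2⟩⟩
      · -- cardinality bound
        have hcard_ins : ((insert v T'').card : ℝ) ≤ (T''.card : ℝ) + 1 := by
          exact_mod_cast Finset.card_insert_le v T''
        -- degree notation
        set G := F.filter (fun X => v ∈ X) with hG_def
        have hdeg_split : ∀ u, (F.filter fun X => u ∈ X).card
            = (G.filter fun X => u ∈ X).card + (F'.filter fun X => u ∈ X).card := by
          intro u
          have h1 : ((F.filter fun X => u ∈ X).filter fun X => v ∈ X).card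
              + ((F.filter fun X => u ∈ X).filter fun X => v ∉ X).card
              = (F.filter fun X => u ∈ X).card :=
            Finset.card_filter_add_card_filter_not _
          rw [Finset.filter_comm] at h1
          rw [← h1]
          congr 1
          rw [Finset.filter_comm]
        -- Step A : (k : ℝ) ≤ ∑ u ∈ T, t u * (G.filter fun X => u ∈ X).card
        have hA : (k : ℝ) ≤ ∑ u ∈ T, t u * ((G.filter fun X => u ∈ X).card : ℝ) := by
          have hswap : ∑ u ∈ T, t u * ((G.filter fun X => u ∈ X).card : ℝ)
              = ∑ X ∈ G, ∑ u ∈ X, t u := by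
            have h1 : ∀ u ∈ T, t u * ((G.filter fun X => u ∈ X).card : ℝ)
                = ∑ X ∈ G, (if u ∈ X then t u else 0) := by
              intro u _
              rw [← Finset.sum_filter (fun X => u ∈ X) (fun _ : Finset α => t u),
                Finset.sum_const, nsmul_eq_mul, mul_comm]
            rw [Finset.sum_congr rfl h1, Finset.sum_comm]
            refine Finset.sum_congr rfl fun X hX => ?_
            have hXT : X ⊆ T := hsub X (Finset.mem_filter.1 hX).1
            rw [← Finset.sum_filter (fun x => x ∈ X) t, Finset.filter_mem_eq_inter,
              Finset.inter_eq_right.2 hXT]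
          rw [hswap]
          have h2 : ∀ X ∈ G, (1 : ℝ) ≤ ∑ u ∈ X, t u :=
            fun X hX => hfrac X (Finset.mem_filter.1 hX).1
          calc (k : ℝ) = (G.card : ℝ) * 1 := by rw [hk_def]; ring
            _ ≤ ∑ X ∈ G, ∑ u ∈ X, t u := by
                have := Finset.card_nsmul_le_sum G (fun X => ∑ u ∈ X, t u) 1 h2
                rw [nsmul_eq_mul] at this
                linarith
        -- Step B : per-element bound
        have hkpos : (0 : ℝ) < (k : ℝ) := by exact_mod_cast hk1
        have hB : ∀ u ∈ T, t u * ((G.filter fun X => u ∈ X).card : ℝ) / k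
            ≤ t u * Hh ((F.filter fun X => u ∈ X).card)
              - t u * Hh ((F'.filter fun X => u ∈ X).card) := by
          intro u huT
          have hds := hdeg_split u
          have hle : (F'.filter fun X => u ∈ X).card ≤ (F.filter fun X => u ∈ X).card := by
            omega
          have hbk : (F.filter fun X => u ∈ X).card ≤ k := hvmax u huT
          have hdiff := Hh_diff hle hbk hk1
          have hc : (F.filter fun X => u ∈ X).card - (F'.filter fun X => u ∈ X).card
              = (G.filter fun X => u ∈ X).card := by omega
          rw [hc] at hdiff
          have hmul := mul_le_mul_of_nonneg_left hdiff (ht0 u)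
          calc t u * ((G.filter fun X => u ∈ X).card : ℝ) / k
              = t u * (((G.filter fun X => u ∈ X).card : ℝ) / k) := mul_div_assoc _ _ _
            _ ≤ t u * (Hh ((F.filter fun X => u ∈ X).card)
                  - Hh ((F'.filter fun X => u ∈ X).card)) := hmul
            _ = t u * Hh ((F.filter fun X => u ∈ X).card)
                  - t u * Hh ((F'.filter fun X => u ∈ X).card) := mul_sub _ _ _
        have hsum1 : (1 : ℝ) ≤ ∑ u ∈ T,
            (t u * Hh ((F.filter fun X => u ∈ X).card)
              - t u * Hh ((F'.filter fun X => u ∈ X).card)) := by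
          have h3 : (∑ u ∈ T, t u * ((G.filter fun X => u ∈ X).card : ℝ)) / k
              = ∑ u ∈ T, t u * ((G.filter fun X => u ∈ X).card : ℝ) / k :=
            Finset.sum_div _ _ _
          have h4 := Finset.sum_le_sum hB
          have h5 : (1 : ℝ) ≤ (∑ u ∈ T, t u * ((G.filter fun X => u ∈ X).card : ℝ)) / k := by
            rw [le_div_iff₀ hkpos, one_mul]; exact hA
          rw [h3] at h5
          linarith
        rw [Finset.sum_sub_distrib] at hsum1
        linarith

/-- Lovász's greedy bound: if a set family `F` on `T` has a fractional transversal
`t` of value `τ = ∑_{v ∈ T} t v`, and every element of `T` belongs to at most `Δ`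
members, then there exists a transversal of `F` of size at most `τ·H(Δ)`. -/
theorem stmt_15 {α : Type*} [DecidableEq α] (T : Finset α) (F : Finset (Finset α))
    (hsub : ∀ X ∈ F, X ⊆ T)
    (t : α → ℝ) (ht0 : ∀ v, 0 ≤ t v) (ht1 : ∀ v, t v ≤ 1)
    (hfrac : ∀ X ∈ F, 1 ≤ ∑ v ∈ X, t v)
    (Δ : ℕ) (hΔ : ∀ v ∈ T, (F.filter fun X => v ∈ X).card ≤ Δ) :
    ∃ T' ⊆ T, (∀ X ∈ F, (T' ∩ X).Nonempty) ∧
      (T'.card : ℝ) ≤ (∑ v ∈ T, t v) * ∑ i ∈ Finset.range Δ, (1 : ℝ) / (i + 1) := by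
  obtain ⟨T', hT'sub, hT'trans, hT'card⟩ := key T t ht0 F.card F le_rfl hsub hfrac
  refine ⟨T', hT'sub, hT'trans, le_trans hT'card ?_⟩
  rw [Finset.sum_mul]
  refine Finset.sum_le_sum fun v hv => ?_
  have : Hh ((F.filter fun X => v ∈ X).card) ≤ Hh Δ := Hh_mono (hΔ v hv)
  have h2 : Hh Δ = ∑ i ∈ Finset.range Δ, (1 : ℝ) / (i + 1) := rfl
  nlinarith [ht0 v, this, Hh_nonneg ((F.filter fun X => v ∈ X).card)]
end

section
/- Let T be a finite set, k < |T|, and let F be a k-regular biset-family on T. Let C(F^k) be the cores of F^k, and for each core Ĉ let Û_C be the union of all bisets in F^k that contain Ĉ and contain no other core of F^k. Then the sets {U_C : Ĉ ∈ C(F^k)} are pairwise disjoint. -/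
open Finset
open scoped Classical

/-- Containment order on bisets. -/
def BisetLE {α : Type*} [DecidableEq α] (A B : Finset α × Finset α) : Prop :=
  A.1 ⊂ B.1 ∨ (A.1 = B.1 ∧ A.2 ⊆ B.2)

/-- A core of `F` is an inclusion-minimal member of `F`. -/
def IsCore {α : Type*} [DecidableEq α] (F : Finset (Finset α × Finset α))
    (A : Finset α × Finset α) : Prop :=
  A ∈ F ∧ ∀ B ∈ F, BisetLE B A → B = A

/-- The members of `F` containing the core `C` and no other core of `F`. -/
noncomputable def exclMembers {α : Type*} [DecidableEq α]
    (F : Finset (Finset α × Finset α)) (C : Finset α × Finset α) :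
    Finset (Finset α × Finset α) :=
  F.filter fun A => BisetLE C A ∧ ∀ C', IsCore F C' → BisetLE C' A → C' = C

/-- `U_C`: the inner part of `Û_C`, the (componentwise) union of all members of `F`
containing the core `C` and no other core. -/
noncomputable def innerUnion {α : Type*} [DecidableEq α]
    (F : Finset (Finset α × Finset α)) (C : Finset α × Finset α) : Finset α :=
  (exclMembers F C).sup Prod.fst

theorem bisetLE_trans {α : Type*} [DecidableEq α] {A B C : Finset α × Finset α}
    (h1 : BisetLE A B) (h2 : BisetLE B C) : BisetLE A C := by
  rcases h1 with h1 | ⟨h1, h1'⟩ <;> rcases h2 with h2 | ⟨h2, h2'⟩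
  · exact Or.inl (h1.trans h2)
  · exact Or.inl (h2 ▸ h1)
  · exact Or.inl (h1 ▸ h2)
  · exact Or.inr ⟨h1.trans h2, h1'.trans h2'⟩

theorem existsCoreLE {α : Type*} [DecidableEq α]
    (G : Finset (Finset α × Finset α)) (N : ℕ)
    (hN : ∀ E ∈ G, E.2.card ≤ N) :
    ∀ A, A ∈ G → ∃ C, IsCore G C ∧ BisetLE C A := by
  suffices H : ∀ n A, A ∈ G → A.1.card * (N + 1) + A.2.card ≤ n →
      ∃ C, IsCore G C ∧ BisetLE C A by
    intro A hA
    exact H (A.1.card * (N + 1) + A.2.card) A hA le_rfl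
  intro n
  induction n using Nat.strong_induction_on with
  | _ n ih =>
    intro A hA hm
    by_cases h : ∀ B ∈ G, BisetLE B A → B = A
    · exact ⟨A, ⟨hA, h⟩, Or.inr ⟨rfl, le_rfl⟩⟩
    · push_neg at h
      obtain ⟨B, hBG, hBA, hBne⟩ := h
      have hmB : B.1.card * (N + 1) + B.2.card < A.1.card * (N + 1) + A.2.card := by
        rcases hBA with h1 | ⟨h1, h2⟩
        · have hc : B.1.card < A.1.card := Finset.card_lt_card h1
          have hb2 : B.2.card ≤ N := hN B hBG
          nlinarith
        · have h2' : B.2 ⊂ A.2 := by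
            refine Finset.ssubset_iff_subset_ne.mpr ⟨h2, fun he => hBne ?_⟩
            exact Prod.ext h1 he
          have : B.2.card < A.2.card := Finset.card_lt_card h2'
          rw [h1]
          omega
      obtain ⟨C, hCcore, hCB⟩ :=
        ih (B.1.card * (N + 1) + B.2.card) (lt_of_lt_of_le hmB hm) B hBG le_rfl
      exact ⟨C, hCcore, bisetLE_trans hCB hBA⟩

/-- For a `k`-regular biset-family `F` on `T` with `k < |T|`, the sets
`{U_C : Ĉ a core of F^k}` are pairwise disjoint. -/
theorem stmt_16 {α : Type*} [DecidableEq α] (T : Finset α) (k : ℕ) (hk : k < T.card)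
    (F : Finset (Finset α × Finset α))
    (hB : ∀ A ∈ F, IsBisetOn T A) (hreg : KRegular T k F)
    (C C' : Finset α × Finset α)
    (hC : IsCore (smallPart T k F) C) (hC' : IsCore (smallPart T k F) C')
    (hCC' : C ≠ C') :
    Disjoint (innerUnion (smallPart T k F) C) (innerUnion (smallPart T k F) C') := by
  classical
  rw [Finset.disjoint_left]
  intro x hx hx'
  rw [innerUnion, Finset.mem_sup] at hx hx'
  obtain ⟨A, hA, hxA⟩ := hx
  obtain ⟨B, hBmem, hxB⟩ := hx'
  rw [exclMembers, Finset.mem_filter] at hA hBmem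
  obtain ⟨hAk, hCA, hAexcl⟩ := hA
  obtain ⟨hBk, hCB, hBexcl⟩ := hBmem
  obtain ⟨hAF, hAcard⟩ := Finset.mem_filter.mp hAk
  obtain ⟨hBF, hBcard⟩ := Finset.mem_filter.mp hBk
  have hne : (A.1 ∩ B.1).Nonempty := ⟨x, Finset.mem_inter.mpr ⟨hxA, hxB⟩⟩
  have hint : 1 ≤ (A.1 ∩ B.1).card := Finset.card_pos.mpr hne
  have hu : (A.1 ∪ B.1).card + (A.1 ∩ B.1).card = A.1.card + B.1.card :=
    Finset.card_union_add_card_inter _ _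
  have hucard : (A.1 ∪ B.1).card + k + 1 ≤ T.card := by omega
  have hD : (A.1 ∩ B.1, A.2 ∩ B.2) ∈ F := (hreg.2 A hAF B hBF hne hucard).1
  set D : Finset α × Finset α := (A.1 ∩ B.1, A.2 ∩ B.2) with hDdef
  have hDk : D ∈ smallPart T k F := by
    rw [smallPart, Finset.mem_filter]
    refine ⟨hD, ?_⟩
    have : D.1.card ≤ A.1.card := Finset.card_le_card Finset.inter_subset_left
    omega
  have hDA : BisetLE D A := by
    by_cases h : D.1 = A.1
    · exact Or.inr ⟨h, Finset.inter_subset_left⟩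
    · exact Or.inl (Finset.ssubset_iff_subset_ne.mpr ⟨Finset.inter_subset_left, h⟩)
  have hDB : BisetLE D B := by
    by_cases h : D.1 = B.1
    · exact Or.inr ⟨h, Finset.inter_subset_right⟩
    · exact Or.inl (Finset.ssubset_iff_subset_ne.mpr ⟨Finset.inter_subset_right, h⟩)
  obtain ⟨C'', hC''core, hC''D⟩ :=
    existsCoreLE (smallPart T k F) T.card
      (fun E hE => Finset.card_le_card (hB E (Finset.mem_filter.mp hE).1).2) D hDk
  have h1 : C'' = C := hAexcl C'' hC''core (bisetLE_trans hC''D hDA)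
  have h2 : C'' = C' := hBexcl C'' hC''core (bisetLE_trans hC''D hDB)
  exact hCC' (h1 ▸ h2)
end

section
/- Let F be a biset-family on T such that both F and its reverse F̄ are closed under intersection of intersecting members (inner parts), and suppose s out-covers a set C of cores of F^k, and S is a star with center s containing one edge from s into the inner part of each member of C. Then ν(F^k_S) ≤ ν(F^k) − |C|/2, i.e., adding the star S reduces the number of cores by at least half the number of out-covered cores: every core of the residual family F^k_S contains either a core of F^k not in C, or at least two cores in C. -/
open Finset
open scoped Classical

/-- The outer part `U_C⁺` of `Û_C`, the componentwise union of all members of `F`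
containing the core `C` and no other core. -/
noncomputable def outerUnion {α : Type*} [DecidableEq α]
    (F : Finset (Finset α × Finset α)) (C : Finset α × Finset α) : Finset α :=
  (exclMembers F C).sup Prod.snd

/-! Let `G` be a maximum family of members of `F^k_S` with pairwise disjoint inner parts.
Distinct cores of an intersection-closed family have disjoint inner parts. A member `A ∈ G`
containing exactly one core `C ∈ 𝒞` is not covered by the edge from `C` to `s`, so `s ∈ A⁺`;
since `s ∉ U_C⁺`, `A` must contain a second core, which is then outside `𝒞`. Hence every
`A ∈ G` contains either a core outside `𝒞` or two cores of `𝒞`. The cores of the first kind,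
together with `𝒞`, form a family of `|𝒞| + |G₁|` cores, while double counting gives
`2 |G₂| ≤ |𝒞|` for the members `G₂` of the second kind. -/

section Bisets

variable {α : Type*} [DecidableEq α]

def IsInterClosed (F : Finset (Finset α × Finset α)) : Prop :=
  ∀ A ∈ F, ∀ B ∈ F, (A.1 ∩ B.1).Nonempty → (A.1 ∩ B.1, A.2 ∩ B.2) ∈ F

theorem bisetLE_refl (A : Finset α × Finset α) : BisetLE A A :=
  Or.inr ⟨rfl, Subset.rfl⟩

theorem BisetLE.fst_subset {A B : Finset α × Finset α} (h : BisetLE A B) : A.1 ⊆ B.1 := by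
  rcases h with h | ⟨h, -⟩
  · exact h.subset
  · exact h.subset

theorem BisetLE.trans {A B C : Finset α × Finset α} (hAB : BisetLE A B) (hBC : BisetLE B C) :
    BisetLE A C := by
  rcases hAB with hAB | ⟨e₁, s₁⟩ <;> rcases hBC with hBC | ⟨e₂, s₂⟩
  · exact Or.inl (hAB.trans hBC)
  · exact Or.inl (e₂ ▸ hAB)
  · exact Or.inl (e₁ ▸ hBC)
  · exact Or.inr ⟨e₁.trans e₂, s₁.trans s₂⟩

theorem bisetLE_of_subset {A B : Finset α × Finset α} (h₁ : A.1 ⊆ B.1) (h₂ : A.2 ⊆ B.2) :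
    BisetLE A B := by
  rcases eq_or_ne A.1 B.1 with h | h
  · exact Or.inr ⟨h, h₂⟩
  · exact Or.inl (Finset.ssubset_iff_subset_ne.2 ⟨h₁, h⟩)

theorem BisetLE.toLex_card_lt {A B : Finset α × Finset α} (h : BisetLE A B) (hne : A ≠ B) :
    toLex (#A.1, #A.2) < toLex (#B.1, #B.2) := by
  rw [Prod.Lex.toLex_lt_toLex]
  rcases h with h | ⟨e, h⟩
  · exact Or.inl (card_lt_card h)
  · exact Or.inr ⟨congrArg card e,
      card_lt_card (Finset.ssubset_iff_subset_ne.2 ⟨h, fun e' => hne (Prod.ext e e')⟩)⟩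

theorem exists_isCore_bisetLE {F : Finset (Finset α × Finset α)} {A : Finset α × Finset α}
    (hA : A ∈ F) : ∃ D, IsCore F D ∧ BisetLE D A := by
  obtain ⟨D, hD, hmin⟩ := (F.filter (BisetLE · A)).exists_min_image
    (fun B => toLex (#B.1, #B.2)) ⟨A, mem_filter.2 ⟨hA, bisetLE_refl A⟩⟩
  rw [mem_filter] at hD
  refine ⟨D, ⟨hD.1, fun B hB hBD => ?_⟩, hD.2⟩
  by_contra hne
  exact (hmin B (mem_filter.2 ⟨hB, hBD.trans hD.2⟩)).not_gt (hBD.toLex_card_lt hne)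

theorem IsCore.fst_nonempty_of_mem {F : Finset (Finset α × Finset α)}
    {C B : Finset α × Finset α} (hC : IsCore F C) (hC₁ : C.1.Nonempty) (hB : B ∈ F) :
    B.1.Nonempty := by
  by_contra hB₁
  rw [not_nonempty_iff_eq_empty] at hB₁
  rw [hC.2 B hB (Or.inl (hB₁ ▸ empty_ssubset.2 hC₁))] at hB₁
  exact hC₁.ne_empty hB₁

theorem IsInterClosed.smallPart {F : Finset (Finset α × Finset α)} (hF : IsInterClosed F)
    (T : Finset α) (k : ℕ) : IsInterClosed (smallPart T k F) := by
  intro A hA B hB hAB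
  rw [_root_.smallPart, mem_filter] at hA hB ⊢
  have : #(A.1 ∩ B.1) ≤ #A.1 := card_le_card inter_subset_left
  exact ⟨hF A hA.1 B hB.1 hAB, show 2 * #(A.1 ∩ B.1) + k ≤ #T by omega⟩

theorem IsInterClosed.isCore_eq {F : Finset (Finset α × Finset α)} (hF : IsInterClosed F)
    {C D : Finset α × Finset α} (hC : IsCore F C) (hD : IsCore F D)
    (hCD : ¬ Disjoint C.1 D.1) : C = D := by
  have hM := hF C hC.1 D hD.1 (not_disjoint_iff_nonempty_inter.1 hCD)
  rw [← hC.2 _ hM (bisetLE_of_subset inter_subset_left inter_subset_left),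
    hD.2 _ hM (bisetLE_of_subset inter_subset_right inter_subset_right)]

theorem card_le_nuBiset_s19 {F H : Finset (Finset α × Finset α)} (hHF : H ⊆ F)
    (hH : (H : Set (Finset α × Finset α)).Pairwise (fun A B => Disjoint A.1 B.1)) :
    #H ≤ nuBiset F := by
  have := le_sup (f := fun G : Finset (Finset α × Finset α) =>
    if (G : Set (Finset α × Finset α)).Pairwise (fun A B => Disjoint A.1 B.1)
    then #G else 0) (mem_powerset.2 hHF)
  rwa [if_pos hH] at this

theorem exists_card_eq_nuBiset (F : Finset (Finset α × Finset α)) :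
    ∃ G ⊆ F, (G : Set (Finset α × Finset α)).Pairwise (fun A B => Disjoint A.1 B.1) ∧
      #G = nuBiset F := by
  obtain ⟨G, hG, hGsup⟩ := F.powerset.exists_mem_eq_sup (powerset_nonempty F) fun G =>
    if (G : Set (Finset α × Finset α)).Pairwise (fun A B => Disjoint A.1 B.1)
    then #G else 0
  rw [nuBiset, hGsup]
  split_ifs with hpair
  · exact ⟨G, mem_powerset.1 hG, hpair, rfl⟩
  · exact ⟨∅, empty_subset F, by simp, rfl⟩

theorem nuBiset_mono {F F' : Finset (Finset α × Finset α)} (h : F ⊆ F') :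
    nuBiset F ≤ nuBiset F' := by
  obtain ⟨G, hGF, hG, hGcard⟩ := exists_card_eq_nuBiset F
  exact hGcard ▸ card_le_nuBiset_s19 (hGF.trans h) hG

theorem IsInterClosed.card_le_nuBiset {F H : Finset (Finset α × Finset α)}
    (hF : IsInterClosed F) (hH : ∀ X ∈ H, IsCore F X) : #H ≤ nuBiset F :=
  _root_.card_le_nuBiset_s19 (fun X hX => (hH X hX).1) fun X hX Y hY hXY => by
    by_contra h
    exact hXY (hF.isCore_eq (hH X hX) (hH Y hY) h)

theorem exists_isCore_ne_of_not_subset_outerUnion {F : Finset (Finset α × Finset α)}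
    {A C : Finset α × Finset α} (hA : A ∈ F) (hCA : BisetLE C A)
    (hAC : ¬ A.2 ⊆ outerUnion F C) : ∃ D, IsCore F D ∧ BisetLE D A ∧ D ≠ C := by
  by_contra! h
  exact hAC (le_sup (f := Prod.snd) (mem_filter.2 ⟨hA, hCA, h⟩))

theorem exists_isCore_not_mem_or_two_le_card {T : Finset α} {F : Finset (Finset α × Finset α)}
    {s : α} (hs : s ∈ T) {𝒞 : Finset (Finset α × Finset α)}
    (hout : ∀ C ∈ 𝒞, s ∈ T \ outerUnion F C) {S : Finset (α × α)}
    (hS : ∀ C ∈ 𝒞, ∃ c ∈ C.1, (c, s) ∈ S) {A : Finset α × Finset α} (hA : A ∈ F)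
    (hAS : ∀ e ∈ S, ¬ EdgeCovers T e A) :
    (∃ D, IsCore F D ∧ BisetLE D A ∧ D ∉ 𝒞) ∨ 2 ≤ #(𝒞.filter (BisetLE · A)) := by
  by_cases hC : ∃ C ∈ 𝒞, BisetLE C A
  · obtain ⟨C, hC𝒞, hCA⟩ := hC
    obtain ⟨c, hc, hcs⟩ := hS C hC𝒞
    have hsA : s ∈ A.2 := by
      by_contra hsA
      exact hAS _ hcs ⟨hCA.fst_subset hc, mem_sdiff.2 ⟨hs, hsA⟩⟩
    obtain ⟨D, hD, hDA, hDC⟩ := exists_isCore_ne_of_not_subset_outerUnion hA hCA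
      fun hsub => (mem_sdiff.1 (hout C hC𝒞)).2 (hsub hsA)
    by_cases hD𝒞 : D ∈ 𝒞
    · right
      refine le_trans ?_ (card_le_card (s := {C, D}) ?_)
      · rw [card_pair hDC.symm]
      · simp [insert_subset_iff, hC𝒞, hCA, hD𝒞, hDA]
    · exact Or.inl ⟨D, hD, hDA, hD𝒞⟩
  · push Not at hC
    obtain ⟨D, hD, hDA⟩ := exists_isCore_bisetLE hA
    exact Or.inl ⟨D, hD, hDA, fun hD𝒞 => hC D hD𝒞 hDA⟩

theorem two_mul_card_add_card_le_two_mul_nuBiset {F G 𝒞 : Finset (Finset α × Finset α)}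
    (hF : IsInterClosed F) (hne : ∀ A ∈ F, A.1.Nonempty) (h𝒞 : ∀ C ∈ 𝒞, IsCore F C)
    (hG : (G : Set (Finset α × Finset α)).Pairwise (fun A B => Disjoint A.1 B.1))
    (hswallow : ∀ A ∈ G,
      (∃ D, IsCore F D ∧ BisetLE D A ∧ D ∉ 𝒞) ∨ 2 ≤ #(𝒞.filter (BisetLE · A))) :
    2 * #G + #𝒞 ≤ 2 * nuBiset F := by
  have hG_eq : ∀ D ∈ F, ∀ A ∈ G, ∀ B ∈ G, BisetLE D A → BisetLE D B → A = B := by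
    intro D hD A hA B hB hDA hDB
    by_contra hAB
    obtain ⟨x, hx⟩ := hne D hD
    exact disjoint_left.1 (hG hA hB hAB) (hDA.fst_subset hx) (hDB.fst_subset hx)
  set G₁ := G.filter fun A => ¬ 2 ≤ #(𝒞.filter (BisetLE · A))
  set G₂ := G.filter fun A => 2 ≤ #(𝒞.filter (BisetLE · A))
  have hG₂ : #G₂ * 2 ≤ #𝒞 * 1 := by
    refine card_mul_le_card_mul (fun A C => BisetLE C A) (fun A hA => (mem_filter.1 hA).2)
      fun C hC => card_le_one.2 fun A hA B hB => ?_
    rw [mem_bipartiteBelow, mem_filter] at hA hB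
    exact hG_eq C (h𝒞 C hC).1 A hA.1.1 B hB.1.1 hA.2 hB.2
  choose! g hg using fun A (hA : A ∈ G₁) =>
    (hswallow A (mem_filter.1 hA).1).resolve_right (mem_filter.1 hA).2
  have hinj : Set.InjOn g G₁ := fun A hA B hB hAB =>
    hG_eq (g A) (hg A hA).1.1 A (mem_filter.1 hA).1 B (mem_filter.1 hB).1 (hg A hA).2.1
      (hAB ▸ (hg B hB).2.1)
  have hH : #𝒞 + #G₁ ≤ nuBiset F := by
    rw [← card_image_of_injOn hinj, ← card_union_of_disjoint]
    · refine hF.card_le_nuBiset fun X hX => ?_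
      rcases mem_union.1 hX with hX | hX
      · exact h𝒞 X hX
      · obtain ⟨A, hA, rfl⟩ := mem_image.1 hX
        exact (hg A hA).1
    · refine disjoint_right.2 fun X hX hX𝒞 => ?_
      obtain ⟨A, hA, rfl⟩ := mem_image.1 hX
      exact (hg A hA).2.2 hX𝒞
  have hsplit : #G₂ + #G₁ = #G := card_filter_add_card_filter_not _
  omega

end Bisets

theorem stmt_19_general {α : Type*} [DecidableEq α] (T : Finset α) (k : ℕ)
    (F : Finset (Finset α × Finset α))
    (hF : ∀ A ∈ F, ∀ B ∈ F, (A.1 ∩ B.1).Nonempty → (A.1 ∩ B.1, A.2 ∩ B.2) ∈ F)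
    (s : α) (hs : s ∈ T)
    (𝒞 : Finset (Finset α × Finset α))
    (h𝒞 : ∀ A ∈ 𝒞, IsCore (smallPart T k F) A)
    (hout : ∀ A ∈ 𝒞, s ∈ T \ outerUnion (smallPart T k F) A)
    (S : Finset (α × α))
    (hS : ∀ A ∈ 𝒞, ∃ c ∈ A.1, (c, s) ∈ S) :
    2 * nuBiset ((smallPart T k F).filter fun A => ∀ e ∈ S, ¬ EdgeCovers T e A) + 𝒞.card
      ≤ 2 * nuBiset (smallPart T k F) := by
  obtain ⟨G, hGF, hG, hGcard⟩ :=
    exists_card_eq_nuBiset ((smallPart T k F).filter fun A => ∀ e ∈ S, ¬ EdgeCovers T e A)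
  rcases 𝒞.eq_empty_or_nonempty with rfl | ⟨C, hC⟩
  · simpa using nuBiset_mono (filter_subset _ (smallPart T k F))
  obtain ⟨c, hc, -⟩ := hS C hC
  rw [← hGcard]
  refine two_mul_card_add_card_le_two_mul_nuBiset (IsInterClosed.smallPart hF T k)
    (fun A hA => (h𝒞 C hC).fst_nonempty_of_mem ⟨c, hc⟩ hA) h𝒞 hG
    fun A hA => ?_
  have hA' := mem_filter.1 (hGF hA)
  exact exists_isCore_not_mem_or_two_le_card hs hout hS hA'.1 hA'.2

/-- If `F` and its reverse family are closed under intersection of intersecting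
members, `s` out-covers a set `𝒞` of cores of `F^k`, and `S` is a star with center
`s` having one edge from the inner part of each member of `𝒞` to `s`, then
`ν(F^k_S) ≤ ν(F^k) - |𝒞|/2`, i.e. `2·ν(F^k_S) + |𝒞| ≤ 2·ν(F^k)`, where `F^k_S` is
the subfamily of members of `F^k` not covered by any edge of `S`. -/
theorem stmt_19 {α : Type*} [DecidableEq α] (T : Finset α) (k : ℕ) (hk : k < T.card)
    (F : Finset (Finset α × Finset α))
    (hB : ∀ A ∈ F, IsBisetOn T A)
    (hreg : KRegular T k F)
    (hF : ∀ A ∈ F, ∀ B ∈ F, (A.1 ∩ B.1).Nonempty → (A.1 ∩ B.1, A.2 ∩ B.2) ∈ F)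
    (hFrev : ∀ A ∈ revFam T F, ∀ B ∈ revFam T F, (A.1 ∩ B.1).Nonempty →
      (A.1 ∩ B.1, A.2 ∩ B.2) ∈ revFam T F)
    (s : α) (hs : s ∈ T)
    (𝒞 : Finset (Finset α × Finset α))
    (h𝒞 : ∀ A ∈ 𝒞, IsCore (smallPart T k F) A)
    (hout : ∀ A ∈ 𝒞, s ∈ T \ outerUnion (smallPart T k F) A)
    (S : Finset (α × α))
    (hScenter : ∀ e ∈ S, e.2 = s)
    (hS : ∀ A ∈ 𝒞, ∃ c ∈ A.1, (c, s) ∈ S) :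
    2 * nuBiset ((smallPart T k F).filter fun A => ∀ e ∈ S, ¬ EdgeCovers T e A) + 𝒞.card
      ≤ 2 * nuBiset (smallPart T k F) :=
  stmt_19_general T k F hF s hs 𝒞 h𝒞 hout S hS
end
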